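/- arXiv:1111.4653 — 2 statements merged into one kernel-verified Lean document; each statement's English description precedes it below -/
import Mathlib

section
/- Let $\varphi \in C^\infty(\mathbb{R}^n \times \mathbb{R}^n)$ be real-valued and define $\Phi(x,y,\xi) = \varphi(y,\xi) - \varphi(x,\xi) + (x-y)\cdot\nabla_x\varphi(x,\xi)$. Assume $|\partial_y^\gamma \varphi(y,\xi)| \le C_\gamma \langle\xi\rangle$ for all multi-indices $\gamma$ with $|\gamma| \ge 2$. Then for every multi-index $\gamma$ there is a constant $C$ such that $\big|\partial_y^\gamma e^{i\Phi(x,y,\xi)}\big|_{y=x}\big| \le C \langle\xi\rangle^{|\gamma|/2}$ for all $x, \xi \in \mathbb{R}^n$. -/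
open MeasureTheory Real Complex

noncomputable section

section Aux

variable {𝕜 : Type*} [NontriviallyNormedField 𝕜]
  {E F G : Type*} [NormedAddCommGroup E] [NormedSpace 𝕜 E]
  [NormedAddCommGroup F] [NormedSpace 𝕜 F] [NormedAddCommGroup G] [NormedSpace 𝕜 G]

lemma aux_norm_compAlong {n : ℕ} (c : OrderedFinpartition n)
    (f : ContinuousMultilinearMap 𝕜 (fun _i : Fin c.length ↦ F) G)
    (p : ∀ i : Fin c.length, ContinuousMultilinearMap 𝕜 (fun _ : Fin (c.partSize i) ↦ E) F) :
    ‖c.compAlongOrderedFinpartition f p‖ ≤ ‖f‖ * ∏ i, ‖p i‖ := by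
  apply ContinuousMultilinearMap.opNorm_le_bound (by positivity) (fun v ↦ ?_)
  simp only [OrderedFinpartition.compAlongOrderFinpartition_apply]
  apply (f.le_opNorm _).trans
  rw [mul_assoc, ← c.prod_sigma_eq_prod, ← Finset.prod_mul_distrib]
  gcongr with m _
  exact (p m).le_opNorm _

lemma aux_clm_iteratedFDeriv_zero (L : E →L[𝕜] F) {m : ℕ} (hm : 2 ≤ m) (x : E) :
    iteratedFDeriv 𝕜 m (fun y => L y) x = 0 := by
  obtain ⟨j, rfl⟩ : ∃ j, m = j + 1 := ⟨m - 1, by omega⟩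
  ext v
  rw [iteratedFDeriv_succ_apply_right]
  have h1 : (fun y => fderiv 𝕜 (fun z => L z) y) = fun _ : E => L := by
    ext1 y; exact L.fderiv
  rw [h1, iteratedFDeriv_const_of_ne (by omega)]
  simp

end Aux

lemma aux_iteratedDeriv_cexp (m : ℕ) :
    iteratedDeriv m (fun t : ℝ => Complex.exp (Complex.I * t)) =
      fun t : ℝ => Complex.I ^ m * Complex.exp (Complex.I * t) := by
  induction m with
  | zero => simp
  | succ m ih =>
    rw [iteratedDeriv_succ, ih]
    ext t
    have h0 : HasDerivAt (fun s : ℝ => (s : ℂ)) 1 t := by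
      simpa using (hasDerivAt_id t).ofReal_comp
    have h1 : HasDerivAt (fun s : ℝ => (Complex.I * s : ℂ)) (Complex.I * 1) t :=
      h0.const_mul Complex.I
    have h2 : HasDerivAt (fun s : ℝ => Complex.exp (Complex.I * s))
        (Complex.exp (Complex.I * t) * (Complex.I * 1)) t := h1.cexp
    have h3 := ((h2.const_mul (Complex.I ^ m))).deriv
    rw [h3]
    ring

lemma aux_norm_iteratedFDeriv_cexp (m : ℕ) (t : ℝ) :
    ‖iteratedFDeriv ℝ m (fun t : ℝ => Complex.exp (Complex.I * t)) t‖ = 1 := by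
  rw [norm_iteratedFDeriv_eq_norm_iteratedDeriv, aux_iteratedDeriv_cexp]
  simp [Complex.norm_exp, Complex.mul_re]

lemma aux_contDiff_cexp : ContDiff ℝ (⊤ : ℕ∞) (fun t : ℝ => Complex.exp (Complex.I * t)) :=
  Complex.contDiff_exp.comp (contDiff_const.mul Complex.ofRealCLM.contDiff)

/-- on-diagonal derivative bounds for `e^{iΦ}`, where
`Φ(x,y,ξ) = φ(y,ξ) - φ(x,ξ) + (x-y)·∇ₓφ(x,ξ)`, given that all `y`-derivatives of
`φ` of order `≥ 2` are `O(⟨ξ⟩)`.  Here `∂_y^γ` with `|γ| = k` is encoded by the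
`k`-th iterated Fréchet derivative in `y`, and `⟨ξ⟩ = (1+|ξ|²)^{1/2}`. -/
theorem exp_phase_diagonal_derivative_bound (n : ℕ)
    (φ : EuclideanSpace ℝ (Fin n) → EuclideanSpace ℝ (Fin n) → ℝ)
    (hsmooth : ContDiff ℝ (⊤ : ℕ∞) (fun p : EuclideanSpace ℝ (Fin n) × EuclideanSpace ℝ (Fin n) => φ p.1 p.2))
    (hder : ∀ k : ℕ, 2 ≤ k → ∃ Ck : ℝ, ∀ (y ξ : EuclideanSpace ℝ (Fin n)),
      ‖iteratedFDeriv ℝ k (fun y' => φ y' ξ) y‖ ≤ Ck * Real.sqrt (1 + ‖ξ‖ ^ 2))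
    (k : ℕ) :
    ∃ C : ℝ, ∀ (x ξ : EuclideanSpace ℝ (Fin n)),
      ‖iteratedFDeriv ℝ k
          (fun y : EuclideanSpace ℝ (Fin n) =>
            Complex.exp (Complex.I *
              ((φ y ξ - φ x ξ + inner ℝ (x - y) (gradient (fun x' => φ x' ξ) x) : ℝ) : ℂ))) x‖
        ≤ C * Real.sqrt (1 + ‖ξ‖ ^ 2) ^ ((k : ℝ) / 2) := by
  classical
  obtain ⟨Cf, hCf⟩ : ∃ Cf : ℕ → ℝ, ∀ m, 2 ≤ m → ∀ y ξ : EuclideanSpace ℝ (Fin n),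
      ‖iteratedFDeriv ℝ m (fun y' => φ y' ξ) y‖ ≤ Cf m * Real.sqrt (1 + ‖ξ‖ ^ 2) := by
    choose Cf hCf using hder
    refine ⟨fun m => if h : 2 ≤ m then Cf m h else 0, fun m h y ξ => ?_⟩
    simpa [h] using hCf m h y ξ
  set D : ℝ := 1 + ∑ m ∈ Finset.range (k + 1), |Cf m| with hD
  have hsum_nonneg : (0:ℝ) ≤ ∑ m ∈ Finset.range (k + 1), |Cf m| :=
    Finset.sum_nonneg fun _ _ => abs_nonneg _
  have hD1 : 1 ≤ D := by rw [hD]; linarith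
  have hDm : ∀ m, m ≤ k → Cf m ≤ D := by
    intro m hm
    have h1 : Cf m ≤ |Cf m| := le_abs_self _
    have h2 : |Cf m| ≤ ∑ m ∈ Finset.range (k + 1), |Cf m| :=
      Finset.single_le_sum (f := fun m => |Cf m|) (fun _ _ => abs_nonneg _)
        (Finset.mem_range.2 (by omega))
    rw [hD]; linarith
  refine ⟨(Fintype.card (OrderedFinpartition k) : ℝ) * D ^ k, fun x ξ => ?_⟩
  set s : ℝ := Real.sqrt (1 + ‖ξ‖ ^ 2) with hs_def
  have hs1 : 1 ≤ s := by
    have h := Real.sqrt_le_sqrt (show (1:ℝ) ≤ 1 + ‖ξ‖ ^ 2 from le_add_of_nonneg_right (sq_nonneg _))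
    rw [Real.sqrt_one] at h
    exact h

  have hs0 : 0 ≤ s := le_trans zero_le_one hs1
  set g' : EuclideanSpace ℝ (Fin n) := gradient (fun x' => φ x' ξ) x with hg'
  set f : EuclideanSpace ℝ (Fin n) → ℝ :=
    fun y => φ y ξ - φ x ξ + inner ℝ (x - y) g' with hf_def
  set G : ℝ → ℂ := fun t => Complex.exp (Complex.I * t) with hG_def
  -- smoothness of the pieces
  have hφξ : ContDiff ℝ (⊤ : ℕ∞) (fun y => φ y ξ) :=
    (hsmooth.of_le (by simp)).comp (contDiff_id.prodMk contDiff_const)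
  set L : EuclideanSpace ℝ (Fin n) →L[ℝ] ℝ :=
    InnerProductSpace.toDual ℝ (EuclideanSpace ℝ (Fin n)) g' with hL
  have hf_eq : f = fun y => φ y ξ + ((-φ x ξ + inner ℝ x g') + (-L) y) := by
    funext y
    have e1 : (inner ℝ (x - y) g' : ℝ) = inner ℝ x g' - inner ℝ y g' := inner_sub_left x y g'
    have e2 : ((-L) y : ℝ) = -(inner ℝ y g' : ℝ) := by
      rw [ContinuousLinearMap.neg_apply, hL, InnerProductSpace.toDual_apply_apply, real_inner_comm]
    rw [hf_def]
    simp only [e1, e2]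
    ring
  have hfC : ContDiff ℝ (⊤ : ℕ∞) f := by
    rw [hf_eq]
    exact hφξ.add (contDiff_const.add (-L).contDiff)
  -- first derivative vanishes at x
  have hdiff : DifferentiableAt ℝ (fun y => φ y ξ) x :=
    (hφξ.differentiable (by simp)).differentiableAt
  have hfd : HasFDerivAt (fun y => φ y ξ) L x := by
    have := hasGradientAt_iff_hasFDerivAt.mp hdiff.hasGradientAt
    exact this
  have hfderiv : fderiv ℝ f x = 0 := by
    have hA : HasFDerivAt (fun y => (-φ x ξ + inner ℝ x g') + (-L) y) (-L) x :=
      ((-L).hasFDerivAt).const_add _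
    have hsum : HasFDerivAt f (L + -L) x := by
      rw [hf_eq]; exact hfd.add hA
    rw [hsum.fderiv]; simp
  have hp1 : iteratedFDeriv ℝ 1 f x = 0 := by
    ext m
    simp [iteratedFDeriv_one_apply, hfderiv]
  -- higher derivatives bounds at x
  have hpm : ∀ m, 2 ≤ m → m ≤ k → ‖iteratedFDeriv ℝ m f x‖ ≤ D * s := by
    intro m h2 hk
    have e1 : iteratedFDeriv ℝ m f x = iteratedFDeriv ℝ m (fun y => φ y ξ) x := by
      rw [hf_eq]
      rw [iteratedFDeriv_add_apply' (hφξ.of_le (by exact_mod_cast le_top)).contDiffAt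
        ((contDiff_const.add (-L).contDiff).of_le (by exact_mod_cast le_top)).contDiffAt]
      rw [iteratedFDeriv_add_apply' (contDiff_const.of_le (by exact_mod_cast le_top)).contDiffAt
        ((-L).contDiff.of_le (by exact_mod_cast le_top)).contDiffAt]
      rw [iteratedFDeriv_const_of_ne (by omega), aux_clm_iteratedFDeriv_zero (-L) h2]
      simp
    rw [e1]
    calc ‖iteratedFDeriv ℝ m (fun y => φ y ξ) x‖ ≤ Cf m * s := hCf m h2 x ξ
    _ ≤ D * s := mul_le_mul_of_nonneg_right (hDm m hk) hs0
  -- Faa di Bruno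
  set p := ftaylorSeries ℝ f with hp_def
  set q := ftaylorSeries ℝ G with hq_def
  have hp : HasFTaylorSeriesUpTo (⊤ : ℕ∞) f p := contDiff_iff_ftaylorSeries.mp hfC
  have hq : HasFTaylorSeriesUpTo (⊤ : ℕ∞) G q := contDiff_iff_ftaylorSeries.mp aux_contDiff_cexp
  have hcomp : HasFTaylorSeriesUpToOn (⊤ : ℕ∞) (G ∘ f)
      (fun z => (q (f z)).taylorComp (p z)) Set.univ :=
    HasFTaylorSeriesUpToOn.comp (hasFTaylorSeriesUpToOn_univ_iff.mpr hq)
      (hasFTaylorSeriesUpToOn_univ_iff.mpr hp) (Set.mapsTo_univ _ _)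
  have hkey : iteratedFDeriv ℝ k (G ∘ f) x
      = ∑ c : OrderedFinpartition k, (q (f x)).compAlongOrderedFinpartition (p x) c := by
    rw [← (hasFTaylorSeriesUpToOn_univ_iff.mp hcomp).eq_iteratedFDeriv
      (m := k) (by exact_mod_cast le_top) x]
    rfl
  have hgoal_fun : (fun y : EuclideanSpace ℝ (Fin n) =>
      Complex.exp (Complex.I * ((f y : ℝ) : ℂ))) = G ∘ f := rfl
  -- per-term estimate
  have hterm : ∀ c : OrderedFinpartition k,
      ‖(q (f x)).compAlongOrderedFinpartition (p x) c‖ ≤ D ^ k * s ^ ((k : ℝ) / 2) := by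
    intro c
    have hb : ‖(q (f x)).compAlongOrderedFinpartition (p x) c‖
        ≤ ‖q (f x) c.length‖ * ∏ i, ‖p x (c.partSize i)‖ :=
      aux_norm_compAlong c (q (f x) c.length) (fun i => p x (c.partSize i))
    have hDk : (0:ℝ) ≤ D ^ k * s ^ ((k : ℝ) / 2) := by positivity
    by_cases hone : ∃ i, c.partSize i = 1
    · obtain ⟨i, hi⟩ := hone
      have hz : ‖p x (c.partSize i)‖ = 0 := by
        rw [hi]
        show ‖iteratedFDeriv ℝ 1 f x‖ = 0
        rw [hp1]; simp
      have hprod : ∏ i, ‖p x (c.partSize i)‖ = 0 :=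
        Finset.prod_eq_zero (Finset.mem_univ i) hz
      calc ‖(q (f x)).compAlongOrderedFinpartition (p x) c‖
          ≤ ‖q (f x) c.length‖ * ∏ i, ‖p x (c.partSize i)‖ := hb
      _ = 0 := by rw [hprod, mul_zero]
      _ ≤ _ := hDk
    · push_neg at hone
      have h2 : ∀ i, 2 ≤ c.partSize i := by
        intro i
        have h0 : c.partSize i ≠ 0 := (c.neZero_partSize i).out
        have h1 := hone i
        omega
      have hsum : ∑ i, c.partSize i = k := by
        have := Fintype.card_congr c.equivSigma
        simpa using this
      have hlen2 : 2 * c.length ≤ k := by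
        have : ∑ _i : Fin c.length, 2 ≤ ∑ i, c.partSize i :=
          Finset.sum_le_sum fun i _ => h2 i
        simpa [hsum, mul_comm] using this
      have hfac : ∀ i, ‖p x (c.partSize i)‖ ≤ D * s := by
        intro i
        exact hpm (c.partSize i) (h2 i) (c.partSize_le i)
      have hq1 : ‖q (f x) c.length‖ ≤ 1 :=
        le_of_eq (aux_norm_iteratedFDeriv_cexp c.length (f x))
      have hprod_le : ∏ i, ‖p x (c.partSize i)‖ ≤ (D * s) ^ c.length := by
        calc ∏ i, ‖p x (c.partSize i)‖ ≤ ∏ _i : Fin c.length, (D * s) :=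
          Finset.prod_le_prod (fun i _ => norm_nonneg _) (fun i _ => hfac i)
        _ = (D * s) ^ c.length := by
          rw [Finset.prod_const, Finset.card_univ, Fintype.card_fin]
      calc ‖(q (f x)).compAlongOrderedFinpartition (p x) c‖
          ≤ ‖q (f x) c.length‖ * ∏ i, ‖p x (c.partSize i)‖ := hb
      _ ≤ 1 * (D * s) ^ c.length := by
        apply mul_le_mul hq1 hprod_le (Finset.prod_nonneg fun i _ => norm_nonneg _) zero_le_one
      _ = D ^ c.length * s ^ c.length := by rw [one_mul, mul_pow]
      _ ≤ D ^ k * s ^ ((k : ℝ) / 2) := by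
        apply mul_le_mul
        · exact pow_le_pow_right₀ hD1 c.length_le
        · rw [← Real.rpow_natCast s c.length]
          apply Real.rpow_le_rpow_of_exponent_le hs1
          have : (2 : ℝ) * c.length ≤ k := by exact_mod_cast hlen2
          linarith
        · positivity
        · positivity
  -- assemble
  rw [show (fun y : EuclideanSpace ℝ (Fin n) =>
      Complex.exp (Complex.I *
        ((φ y ξ - φ x ξ + inner ℝ (x - y) g' : ℝ) : ℂ))) = G ∘ f from rfl, hkey]
  calc ‖∑ c : OrderedFinpartition k, (q (f x)).compAlongOrderedFinpartition (p x) c‖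
      ≤ ∑ c : OrderedFinpartition k, ‖(q (f x)).compAlongOrderedFinpartition (p x) c‖ :=
        norm_sum_le _ _
  _ ≤ ∑ _c : OrderedFinpartition k, D ^ k * s ^ ((k : ℝ) / 2) :=
        Finset.sum_le_sum fun c _ => hterm c
  _ = (Fintype.card (OrderedFinpartition k) : ℝ) * (D ^ k * s ^ ((k : ℝ) / 2)) := by
        rw [Finset.sum_const, Finset.card_univ, nsmul_eq_mul]
  _ = (Fintype.card (OrderedFinpartition k) : ℝ) * D ^ k * s ^ ((k : ℝ) / 2) := by ring
end
end

section
/- Let $\varphi \in C^\infty(\mathbb{R}^n \times \mathbb{R}^n)$ be real-valued with $|\partial_y^\beta \varphi(y,\xi)| \le C_\beta\langle\xi\rangle$ for all multi-indices $\beta$ with $|\beta| \ge 2$, and set $\Phi(x,y,\xi) = \varphi(y,\xi) - \varphi(x,\xi) + (x-y)\cdot\nabla_x\varphi(x,\xi)$. Then for every multi-index $\alpha$ there exists $C_\alpha$ such that $|\partial_y^\alpha e^{i\Phi(x,y,\xi)}| \le C_\alpha (1 + |x-y|\langle\xi\rangle)^{|\alpha|} \langle\xi\rangle^{|\alpha|/2}$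 for all $x, y, \xi \in \mathbb{R}^n$. -/
open MeasureTheory Real Complex

noncomputable section

lemma iteratedDeriv_exp_I_mul (i : ℕ) (t : ℝ) :
    iteratedDeriv i (fun t : ℝ => Complex.exp (Complex.I * t)) t
      = Complex.I ^ i * Complex.exp (Complex.I * t) := by
  induction i generalizing t with
  | zero => simp
  | succ i ih =>
    rw [iteratedDeriv_succ]
    have heq : deriv (iteratedDeriv i fun t : ℝ => Complex.exp (Complex.I * t)) t
        = deriv (fun t : ℝ => Complex.I ^ i * Complex.exp (Complex.I * t)) t := by
      apply Filter.EventuallyEq.deriv_eq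
      filter_upwards with u using ih u
    rw [heq]
    have hd : HasDerivAt (fun t : ℝ => Complex.exp (Complex.I * t))
        (Complex.I * Complex.exp (Complex.I * t)) t := by
      have h1 : HasDerivAt (fun z : ℂ => Complex.exp (Complex.I * z))
          (Complex.exp (Complex.I * (t : ℂ)) * Complex.I) (t : ℂ) := by
        have h2 := (Complex.hasDerivAt_exp (Complex.I * t)).comp (t : ℂ)
          ((hasDerivAt_id (t : ℂ)).const_mul Complex.I)
        simpa [Function.comp_def, mul_one] using h2
      have h3 := h1.comp_ofReal
      rwa [mul_comm] at h3
    rw [(hd.const_mul (Complex.I ^ i)).deriv]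
    ring

set_option maxHeartbeats 1600000 in
/-- off-diagonal derivative bounds for `e^{iΦ}`, where
`Φ(x,y,ξ) = φ(y,ξ) - φ(x,ξ) + (x-y)·∇ₓφ(x,ξ)`:
`|∂_y^α e^{iΦ}| ≤ C (1+|x-y|⟨ξ⟩)^{|α|} ⟨ξ⟩^{|α|/2}`. -/
theorem exp_phase_off_diagonal_derivative_bound (n : ℕ)
    (φ : EuclideanSpace ℝ (Fin n) → EuclideanSpace ℝ (Fin n) → ℝ)
    (hsmooth : ContDiff ℝ (⊤ : ℕ∞) (fun p : EuclideanSpace ℝ (Fin n) × EuclideanSpace ℝ (Fin n) => φ p.1 p.2))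
    (hder : ∀ k : ℕ, 2 ≤ k → ∃ Ck : ℝ, ∀ (y ξ : EuclideanSpace ℝ (Fin n)),
      ‖iteratedFDeriv ℝ k (fun y' => φ y' ξ) y‖ ≤ Ck * Real.sqrt (1 + ‖ξ‖ ^ 2))
    (k : ℕ) :
    ∃ C : ℝ, ∀ (x y ξ : EuclideanSpace ℝ (Fin n)),
      ‖iteratedFDeriv ℝ k
          (fun y' : EuclideanSpace ℝ (Fin n) =>
            Complex.exp (Complex.I *
              ((φ y' ξ - φ x ξ + inner ℝ (x - y') (gradient (fun x' => φ x' ξ) x) : ℝ) : ℂ))) y‖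
        ≤ C * (1 + ‖x - y‖ * Real.sqrt (1 + ‖ξ‖ ^ 2)) ^ (k : ℝ)
            * Real.sqrt (1 + ‖ξ‖ ^ 2) ^ ((k : ℝ) / 2) := by
  classical
  obtain ⟨C2, hC2⟩ := hder 2 le_rfl
  choose Ck hCk using hder
  set M : ℝ := ∑ i ∈ Finset.range (k + 1), _root_.abs (if h : 2 ≤ i then Ck i h else 0) with hM
  have hM0 : 0 ≤ M := Finset.sum_nonneg fun i _ => abs_nonneg _
  have hMle : ∀ i (h : 2 ≤ i), i ≤ k → Ck i h ≤ M := by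
    intro i h hik
    have h1 : Ck i h ≤ _root_.abs (if h' : 2 ≤ i then Ck i h' else 0) := by
      rw [dif_pos h]; exact le_abs_self _
    have h2 : _root_.abs (if h' : 2 ≤ i then Ck i h' else 0) ≤ M := by
      rw [hM]
      exact Finset.single_le_sum
        (f := fun j => _root_.abs (if h' : 2 ≤ j then Ck j h' else 0))
        (fun j _ => abs_nonneg _) (Finset.mem_range.2 (by omega))
    linarith
  refine ⟨(Nat.factorial k : ℝ) * (1 + |C2|) ^ k * (1 + Real.sqrt M) ^ k, fun x y ξ => ?_⟩
  set s : ℝ := Real.sqrt (1 + ‖ξ‖ ^ 2) with hs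
  have hs1 : 1 ≤ s := by
    rw [hs]
    have h := Real.sq_sqrt (show (0:ℝ) ≤ 1 + ‖ξ‖ ^ 2 by positivity)
    nlinarith [Real.sqrt_nonneg (1 + ‖ξ‖ ^ 2), sq_nonneg ‖ξ‖]
  have hs0 : 0 ≤ s := by linarith
  set ψ : EuclideanSpace ℝ (Fin n) → ℝ := fun y' => φ y' ξ with hψdef
  have hψ : ContDiff ℝ (⊤ : ℕ∞) ψ := by
    rw [hψdef]
    exact hsmooth.comp (contDiff_id.prodMk contDiff_const)
  set g0 : EuclideanSpace ℝ (Fin n) := gradient (fun x' => φ x' ξ) x with hg0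
  have hLg : innerSL ℝ g0 = fderiv ℝ ψ x := by
    ext v
    rw [innerSL_apply_apply, hg0]
    exact InnerProductSpace.toDual_symm_apply
  set a : EuclideanSpace ℝ (Fin n) → ℝ := fun y' => ((inner ℝ x g0 : ℝ) - φ x ξ) - innerSL ℝ g0 y' with hadef
  have ha : ContDiff ℝ (⊤ : ℕ∞) a := contDiff_const.sub (innerSL ℝ g0).contDiff
  have hda : ∀ z : EuclideanSpace ℝ (Fin n), HasFDerivAt a (-(innerSL ℝ g0)) z := fun z =>
    (innerSL ℝ g0).hasFDerivAt.const_sub _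
  have hf : ContDiff ℝ (⊤ : ℕ∞) (ψ + a) := hψ.add ha
  set gfun : ℝ → ℂ := fun t : ℝ => Complex.exp (Complex.I * t) with hgdef
  have hg : ContDiff ℝ (⊤ : ℕ∞) gfun := by
    have h1 : ContDiff ℝ (⊤ : ℕ∞) (fun t : ℝ => Complex.I * (t : ℂ)) :=
      contDiff_const.mul Complex.ofRealCLM.contDiff
    have h2 : ContDiff ℝ (⊤ : ℕ∞) (Complex.exp : ℂ → ℂ) := Complex.contDiff_exp
    exact h2.comp h1
  have hEq : (fun y' : EuclideanSpace ℝ (Fin n) =>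
      Complex.exp (Complex.I *
        ((φ y' ξ - φ x ξ + inner ℝ (x - y') (gradient (fun x' => φ x' ξ) x) : ℝ) : ℂ)))
      = gfun ∘ (ψ + a) := by
    funext y'
    have hre : φ y' ξ - φ x ξ + (inner ℝ (x - y') (gradient (fun x' => φ x' ξ) x) : ℝ)
        = (ψ + a) y' := by
      simp only [Pi.add_apply, hψdef, hadef, innerSL_apply_apply, inner_sub_left]
      rw [real_inner_comm g0 y']
      ring
    show Complex.exp (Complex.I *
        ((φ y' ξ - φ x ξ + inner ℝ (x - y') (gradient (fun x' => φ x' ξ) x) : ℝ) : ℂ))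
      = Complex.exp (Complex.I * (((ψ + a) y' : ℝ) : ℂ))
    rw [hre]
  rw [hEq]
  -- bounds on derivatives of gfun
  have hgbound : ∀ i, ‖iteratedFDeriv ℝ i gfun ((ψ + a) y)‖ ≤ 1 := by
    intro i
    rw [norm_iteratedFDeriv_eq_norm_iteratedDeriv, hgdef, iteratedDeriv_exp_I_mul]
    rw [norm_mul, norm_pow, Complex.norm_I, one_pow, one_mul]
    rw [Complex.norm_exp]
    simp
  -- second derivative bound for ψ
  have hC2' : ∀ z : EuclideanSpace ℝ (Fin n), ‖fderiv ℝ (fderiv ℝ ψ) z‖ ≤ |C2| * s := by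
    intro z
    have h1 : ‖fderiv ℝ (fderiv ℝ ψ) z‖ = ‖iteratedFDeriv ℝ 2 ψ z‖ := by
      rw [← norm_iteratedFDeriv_fderiv]
      rw [show (1 : ℕ) = 0 + 1 from rfl, ← norm_iteratedFDeriv_fderiv,
        norm_iteratedFDeriv_zero]
    rw [h1]
    calc ‖iteratedFDeriv ℝ 2 ψ z‖ ≤ C2 * s := hC2 z ξ
      _ ≤ |C2| * s := by
          have := le_abs_self C2
          nlinarith
  have hdψ : ∀ z : EuclideanSpace ℝ (Fin n), DifferentiableAt ℝ (fderiv ℝ ψ) z := fun z =>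
    ((hψ.fderiv_right (m := (⊤ : ℕ∞)) (by simp)).differentiable (by simp)).differentiableAt
  -- mean value theorem
  have hMV : ‖fderiv ℝ ψ y - fderiv ℝ ψ x‖ ≤ (|C2| * s) * ‖y - x‖ :=
    (convex_univ : Convex ℝ (Set.univ : Set (EuclideanSpace ℝ (Fin n)))).norm_image_sub_le_of_norm_fderiv_le
      (fun z _ => hdψ z) (fun z _ => hC2' z) (Set.mem_univ x) (Set.mem_univ y)
  set A : ℝ := |C2| * (‖x - y‖ * s) with hA
  set B : ℝ := M * s with hB
  have hA0 : 0 ≤ A := by positivity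
  have hB0 : 0 ≤ B := by positivity
  set D : ℝ := max A 1 * max (Real.sqrt B) 1 with hD
  have hD1 : 1 ≤ D := by
    rw [hD]
    calc (1 : ℝ) = 1 * 1 := by ring
      _ ≤ max A 1 * max (Real.sqrt B) 1 :=
          mul_le_mul (le_max_right _ _) (le_max_right _ _) zero_le_one
            (le_trans zero_le_one (le_max_right _ _))
  have hD0 : 0 ≤ D := by linarith
  -- derivative bounds for f = ψ + a
  have hfd : ∀ i, 1 ≤ i → i ≤ k → ‖iteratedFDeriv ℝ i (ψ + a) y‖ ≤ D ^ i := by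
    intro i h1i hik
    rcases Nat.lt_or_ge i 2 with hi2 | hi2
    · -- i = 1
      have hi1 : i = 1 := by omega
      subst hi1
      have hfder : HasFDerivAt (ψ + a) (fderiv ℝ ψ y - fderiv ℝ ψ x) y := by
        have h1 := ((hψ.differentiable (by simp)) y).hasFDerivAt.add (hda y)
        rwa [hLg, ← sub_eq_add_neg] at h1
      have h2 : ‖iteratedFDeriv ℝ 1 (ψ + a) y‖ = ‖fderiv ℝ (ψ + a) y‖ := by
        rw [show (1 : ℕ) = 0 + 1 from rfl, ← norm_iteratedFDeriv_fderiv,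
          norm_iteratedFDeriv_zero]
      rw [h2, hfder.fderiv, pow_one]
      calc ‖fderiv ℝ ψ y - fderiv ℝ ψ x‖ ≤ (|C2| * s) * ‖y - x‖ := hMV
        _ = A := by rw [hA, norm_sub_rev]; ring
        _ ≤ max A 1 := le_max_left _ _
        _ ≤ D := by
            rw [hD]
            nlinarith [le_max_right (Real.sqrt B) (1 : ℝ),
              le_trans hA0 (le_max_left A (1 : ℝ))]
    · -- i ≥ 2
      have hsum : ‖iteratedFDeriv ℝ i (ψ + a) y‖
          ≤ ‖iteratedFDeriv ℝ i ψ y‖ + ‖iteratedFDeriv ℝ i a y‖ := by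
        rw [iteratedFDeriv_add_apply (hψ.of_le (by exact_mod_cast le_top)).contDiffAt (ha.of_le (by exact_mod_cast le_top)).contDiffAt]
        exact norm_add_le _ _
      have hia : ‖iteratedFDeriv ℝ i a y‖ = 0 := by
        obtain ⟨j, rfl⟩ : ∃ j, i = j + 2 := ⟨i - 2, by omega⟩
        have hfa : fderiv ℝ a = fun _ : EuclideanSpace ℝ (Fin n) => -(innerSL ℝ g0) := by
          funext z; exact (hda z).fderiv
        rw [show j + 2 = (j + 1) + 1 from rfl, ← norm_iteratedFDeriv_fderiv, hfa,
          iteratedFDeriv_const_of_ne (Nat.succ_ne_zero j)]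
        simp
      have hiψ : ‖iteratedFDeriv ℝ i ψ y‖ ≤ B := by
        calc ‖iteratedFDeriv ℝ i ψ y‖ ≤ Ck i hi2 * s := hCk i hi2 y ξ
          _ ≤ M * s := mul_le_mul_of_nonneg_right (hMle i hi2 hik) hs0
      have hBD2 : B ≤ D ^ 2 := by
        have hsB : Real.sqrt B ≤ D := by
          rw [hD]
          calc Real.sqrt B ≤ max (Real.sqrt B) 1 := le_max_left _ _
            _ = 1 * max (Real.sqrt B) 1 := (one_mul _).symm
            _ ≤ max A 1 * max (Real.sqrt B) 1 :=
                mul_le_mul_of_nonneg_right (le_max_right _ _)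
                  (le_trans zero_le_one (le_max_right _ _))
        calc B = Real.sqrt B ^ 2 := (Real.sq_sqrt hB0).symm
          _ ≤ D ^ 2 := pow_le_pow_left₀ (Real.sqrt_nonneg B) hsB 2
      calc ‖iteratedFDeriv ℝ i (ψ + a) y‖
            ≤ ‖iteratedFDeriv ℝ i ψ y‖ + ‖iteratedFDeriv ℝ i a y‖ := hsum
        _ = ‖iteratedFDeriv ℝ i ψ y‖ := by rw [hia, add_zero]
        _ ≤ B := hiψ
        _ ≤ D ^ 2 := hBD2
        _ ≤ D ^ i := pow_le_pow_right₀ hD1 hi2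
  have hmain := norm_iteratedFDeriv_comp_le hg hf (by exact_mod_cast le_top) y
    (fun i _ => hgbound i) hfd
  rw [mul_one] at hmain
  -- now estimate D ^ k
  have hsqs : 1 ≤ Real.sqrt s := by
    rw [show (1 : ℝ) = Real.sqrt 1 by simp]
    exact Real.sqrt_le_sqrt hs1
  have hDle : D ≤ ((1 + |C2|) * (1 + ‖x - y‖ * s)) * ((1 + Real.sqrt M) * Real.sqrt s) := by
    rw [hD]
    have h1 : max A 1 ≤ (1 + |C2|) * (1 + ‖x - y‖ * s) := by
      rw [max_le_iff]
      constructor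
      · rw [hA]; nlinarith [abs_nonneg C2, norm_nonneg (x - y), mul_nonneg (norm_nonneg (x - y)) hs0]
      · nlinarith [abs_nonneg C2, mul_nonneg (norm_nonneg (x - y)) hs0]
    have h2 : max (Real.sqrt B) 1 ≤ (1 + Real.sqrt M) * Real.sqrt s := by
      rw [max_le_iff]
      have hBs : Real.sqrt B = Real.sqrt M * Real.sqrt s := by
        rw [hB, Real.sqrt_mul hM0]
      constructor
      · rw [hBs]; nlinarith [Real.sqrt_nonneg M, Real.sqrt_nonneg s]
      · nlinarith [Real.sqrt_nonneg M]
    have hm1 : 0 ≤ max A 1 := le_trans zero_le_one (le_max_right _ _)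
    have hm2 : 0 ≤ max (Real.sqrt B) 1 := le_trans zero_le_one (le_max_right _ _)
    exact mul_le_mul h1 h2 hm2 (by nlinarith [abs_nonneg C2, mul_nonneg (norm_nonneg (x - y)) hs0])
  have hT0 : 0 ≤ 1 + ‖x - y‖ * s := by positivity
  have hrpow1 : (1 + ‖x - y‖ * s) ^ (k : ℝ) = (1 + ‖x - y‖ * s) ^ k :=
    Real.rpow_natCast _ k
  have hrpow2 : s ^ ((k : ℝ) / 2) = Real.sqrt s ^ k := by
    rw [← Real.rpow_natCast (Real.sqrt s) k, Real.sqrt_eq_rpow, ← Real.rpow_mul hs0]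
    congr 1
    ring
  rw [hrpow1, hrpow2]
  calc ‖iteratedFDeriv ℝ k (gfun ∘ (ψ + a)) y‖ ≤ (Nat.factorial k : ℝ) * D ^ k := hmain
    _ ≤ (Nat.factorial k : ℝ) * (((1 + |C2|) * (1 + ‖x - y‖ * s)) * ((1 + Real.sqrt M) * Real.sqrt s)) ^ k := by
        have := pow_le_pow_left₀ hD0 hDle k
        have hfac : (0 : ℝ) ≤ (Nat.factorial k : ℝ) := Nat.cast_nonneg _
        nlinarith [pow_nonneg hD0 k]
    _ = (Nat.factorial k : ℝ) * (1 + |C2|) ^ k * (1 + ‖x - y‖ * s) ^ k * ((1 + Real.sqrt M) ^ k * Real.sqrt s ^ k) := by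
        rw [mul_pow, mul_pow, mul_pow]; ring
    _ = (Nat.factorial k : ℝ) * (1 + |C2|) ^ k * (1 + Real.sqrt M) ^ k * (1 + ‖x - y‖ * s) ^ k * Real.sqrt s ^ k := by
        ring
end
end
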